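/- arXiv:2103.11060 — 2 statements merged into one kernel-verified Lean document; each statement's English description precedes it below -/
import Mathlib

section
/- Let U ⊆ ℝ^n be open, a > 0, and let f₁, f₂ : U × (−a,a) → ℝ^m be smooth (C^∞). Let r ≥ 1 be a natural number, and suppose there is a continuous function δf : U × (−a,a) → ℝ^m with f₂(x,h) − f₁(x,h) = h^r · δf(x,h) for all (x,h). Then there exists a continuous map Δ₂ : U × (−a,a) → Hom(ℝ^n, ℝ^m) such that D_x f₂(x,h) − D_x f₁(x,h) = h^r · Δ₂(x,h) for all (x,h) ∈ U × (−a,a), where D_x f_j(x,h) denotes the partial Fréchet derivative of f_j at (x,h) with respect to the first (ℝ^n) variable. -/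
/-!
Put `g = f₂ - f₁`. Differentiating `g = h ^ r • δf` in `h` shows that `∂ₕᵏ g` vanishes on
`h = 0` for `k < r`; hence so does `D_x ∂ₕᵏ g`, which by the symmetry of second derivatives is
`∂ₕᵏ (D_x g)`. A function whose first `r` derivatives in `h` vanish on `h = 0` is `h ^ r` times a
continuous function: this is proved one power of `h` at a time, the quotient being continuous
on `h = 0` by the mean value inequality applied to `∂ₕ φ = h ^ k • Q`.
-/

open Set Filter Topology

section Divisibility

variable {X F : Type*} [NormedAddCommGroup F] [NormedSpace ℝ F]

theorem norm_sub_pow_succ_div_smul_le {f g : ℝ → F} {c : F} {t C : ℝ} {k : ℕ}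
    (hf : ∀ s ∈ uIcc 0 t, HasDerivAt f (s ^ k • g s) s) (hf₀ : f 0 = 0)
    (hg : ∀ s ∈ uIcc 0 t, ‖g s - c‖ ≤ C) :
    ‖f t - (t ^ (k + 1) / (k + 1)) • c‖ ≤ C * |t| ^ (k + 1) := by
  have hC : 0 ≤ C := (norm_nonneg _).trans (hg 0 left_mem_uIcc)
  have hderiv : ∀ s ∈ uIcc 0 t, HasDerivWithinAt (fun s => f s - (s ^ (k + 1) / (k + 1)) • c)
      (s ^ k • (g s - c)) (uIcc 0 t) s := by
    intro s hs
    have hpow : HasDerivAt (fun s : ℝ => s ^ (k + 1) / (k + 1)) (s ^ k) s := by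
      refine ((hasDerivAt_pow (k + 1) s).div_const ((k : ℝ) + 1)).congr_deriv ?_
      push_cast
      field_simp
    rw [smul_sub]
    exact ((hf s hs).sub (hpow.smul_const c)).hasDerivWithinAt
  have hbound : ∀ s ∈ uIcc 0 t, ‖s ^ k • (g s - c)‖ ≤ C * |t| ^ k := by
    intro s hs
    rw [norm_smul, norm_pow, Real.norm_eq_abs, mul_comm]
    have hst : |s| ≤ |t| := by simpa using abs_sub_left_of_mem_uIcc hs
    gcongr
    exact hg s hs
  have := (convex_uIcc (0 : ℝ) t).norm_image_sub_le_of_norm_hasDerivWithin_le hderiv hbound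
    left_mem_uIcc right_mem_uIcc
  simpa [hf₀, pow_succ, mul_assoc] using this

noncomputable def divPow (k : ℕ) (φ c : X × ℝ → F) (p : X × ℝ) : F :=
  if p.2 = 0 then c p else (p.2 ^ k)⁻¹ • φ p

@[simp]
theorem divPow_mk_zero (k : ℕ) (φ c : X × ℝ → F) (x : X) : divPow k φ c (x, 0) = c (x, 0) :=
  if_pos rfl

theorem eq_pow_smul_divPow {k : ℕ} (hk : k ≠ 0) {φ c : X × ℝ → F} {p : X × ℝ}
    (hφ₀ : p.2 = 0 → φ p = 0) : φ p = p.2 ^ k • divPow k φ c p := by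
  by_cases hp : p.2 = 0
  · simp [hp, hφ₀ hp, zero_pow hk]
  · simp [divPow, hp, smul_smul]

theorem norm_divPow_succ_sub_le {φ Q : X × ℝ → F} {x : X} {t C : ℝ} {c : F} {k : ℕ}
    (hφ' : ∀ s ∈ uIcc 0 t, HasDerivAt (fun s => φ (x, s)) (s ^ k • Q (x, s)) s)
    (hφ₀ : φ (x, 0) = 0) (hQ : ∀ s ∈ uIcc 0 t, ‖Q (x, s) - c‖ ≤ C) :
    ‖divPow (k + 1) φ (((k : ℝ) + 1)⁻¹ • Q) (x, t) - ((k : ℝ) + 1)⁻¹ • c‖ ≤ C := by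
  by_cases ht : t = 0
  · subst ht
    rw [divPow_mk_zero, Pi.smul_apply, ← smul_sub, norm_smul, norm_inv,
      Real.norm_of_nonneg (by positivity)]
    calc ((k : ℝ) + 1)⁻¹ * ‖Q (x, 0) - c‖ ≤ 1 * C := by
          gcongr
          · exact inv_le_one_of_one_le₀ (by simp)
          · exact hQ 0 left_mem_uIcc
      _ = C := one_mul C
  · have hsplit : (t ^ (k + 1))⁻¹ • φ (x, t) - ((k : ℝ) + 1)⁻¹ • c =
        (t ^ (k + 1))⁻¹ • (φ (x, t) - (t ^ (k + 1) / (k + 1)) • c) := by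
      rw [smul_sub, smul_smul]
      congr 2
      field_simp
    rw [divPow, if_neg ht, hsplit, norm_smul, norm_inv, norm_pow, Real.norm_eq_abs]
    calc (|t| ^ (k + 1))⁻¹ * ‖φ (x, t) - (t ^ (k + 1) / (k + 1)) • c‖
        ≤ (|t| ^ (k + 1))⁻¹ * (C * |t| ^ (k + 1)) := by
          gcongr
          exact norm_sub_pow_succ_div_smul_le (f := fun s => φ (x, s)) hφ' hφ₀ hQ
      _ = C := by field_simp

variable [TopologicalSpace X] {S : Set X} {I : Set ℝ}

theorem eventually_forall_uIcc_zero {x₀ : X} {P : X × ℝ → Prop}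
    (hP : ∀ᶠ p in 𝓝 (x₀, (0 : ℝ)), P p) :
    ∀ᶠ p in 𝓝 (x₀, (0 : ℝ)), ∀ s ∈ uIcc 0 p.2, P (p.1, s) := by
  obtain ⟨W, hW, T, hT, hWT⟩ := mem_nhds_prod_iff.1 hP
  obtain ⟨η, hη, hball⟩ := Metric.mem_nhds_iff.1 hT
  filter_upwards [prod_mem_nhds hW (Metric.ball_mem_nhds (0 : ℝ) hη)] with p hp s hs
  refine hWT ⟨hp.1, hball ?_⟩
  have hpη : |p.2 - 0| < η := by simpa [Real.dist_eq] using hp.2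
  simpa [Real.dist_eq] using (abs_sub_left_of_mem_uIcc hs).trans_lt hpη

theorem continuousWithinAt_divPow_of_ne_zero {k : ℕ} {φ c : X × ℝ → F} {s : Set (X × ℝ)}
    {p : X × ℝ} (hφ : ContinuousWithinAt φ s p) (hp : p.2 ≠ 0) :
    ContinuousWithinAt (divPow k φ c) s p := by
  have hquot : divPow k φ c =ᶠ[𝓝 p] fun q => (q.2 ^ k)⁻¹ • φ q := by
    filter_upwards [continuous_snd.continuousAt.eventually_ne hp] with q hq
    simp [divPow, hq]
  refine ContinuousWithinAt.congr_of_eventuallyEq ?_ (nhdsWithin_le_nhds hquot) hquot.eq_of_nhds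
  exact ((continuous_snd.continuousWithinAt.pow k).inv₀ (pow_ne_zero k hp)).smul hφ

theorem continuousWithinAt_divPow_succ_of_hasDerivAt [I.OrdConnected] (hI₀ : (0 : ℝ) ∈ I)
    {φ Q : X × ℝ → F} {k : ℕ} {x₀ : X} (hQ : ContinuousWithinAt Q (S ×ˢ I) (x₀, 0))
    (hφ' : ∀ x ∈ S, ∀ t ∈ I, HasDerivAt (fun s => φ (x, s)) (t ^ k • Q (x, t)) t)
    (hφ₀ : ∀ x ∈ S, φ (x, 0) = 0) :
    ContinuousWithinAt (divPow (k + 1) φ (((k : ℝ) + 1)⁻¹ • Q)) (S ×ˢ I) (x₀, 0) := by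
  rw [ContinuousWithinAt, Metric.tendsto_nhds]
  intro ε hε
  have hQε : ∀ᶠ p in 𝓝 (x₀, (0 : ℝ)), p ∈ S ×ˢ I → dist (Q p) (Q (x₀, 0)) < ε / 2 :=
    eventually_nhdsWithin_iff.1 (Metric.tendsto_nhds.1 hQ _ (half_pos hε))
  refine eventually_nhdsWithin_iff.2 ?_
  filter_upwards [eventually_forall_uIcc_zero hQε] with ⟨x, t⟩ hseg hxt
  have hsegI : uIcc 0 t ⊆ I := Set.OrdConnected.uIcc_subset ‹_› hI₀ hxt.2
  have hbound := norm_divPow_succ_sub_le (fun s hs => hφ' x hxt.1 s (hsegI hs)) (hφ₀ x hxt.1)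
    fun s hs => by simpa [dist_eq_norm] using (hseg s hs ⟨hxt.1, hsegI hs⟩).le
  rw [dist_eq_norm, divPow_mk_zero, Pi.smul_apply]
  linarith

theorem exists_eq_pow_succ_smul_of_hasDerivAt [I.OrdConnected] (hI₀ : (0 : ℝ) ∈ I)
    {φ Q : X × ℝ → F} {k : ℕ} (hφ : ContinuousOn φ (S ×ˢ I)) (hQ : ContinuousOn Q (S ×ˢ I))
    (hφ' : ∀ x ∈ S, ∀ t ∈ I, HasDerivAt (fun s => φ (x, s)) (t ^ k • Q (x, t)) t)
    (hφ₀ : ∀ x ∈ S, φ (x, 0) = 0) :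
    ∃ R : X × ℝ → F, ContinuousOn R (S ×ˢ I) ∧ (∀ p ∈ S ×ˢ I, φ p = p.2 ^ (k + 1) • R p) ∧
      ∀ x ∈ S, R (x, 0) = ((k : ℝ) + 1)⁻¹ • Q (x, 0) := by
  refine ⟨divPow (k + 1) φ (((k : ℝ) + 1)⁻¹ • Q), fun ⟨x, t⟩ hp => ?_,
    fun p hp => eq_pow_smul_divPow k.succ_ne_zero fun h => ?_, fun x _ => divPow_mk_zero ..⟩
  · by_cases ht : t = 0
    · subst ht
      exact continuousWithinAt_divPow_succ_of_hasDerivAt hI₀ (hQ _ hp) hφ' hφ₀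
    · exact continuousWithinAt_divPow_of_ne_zero (hφ _ hp) ht
  · obtain ⟨x, t⟩ := p
    subst h
    exact hφ₀ x hp.1

theorem exists_eq_pow_smul_of_hasDerivAt [I.OrdConnected] (hI₀ : (0 : ℝ) ∈ I)
    (ψ : ℕ → X × ℝ → F) (k : ℕ) (hψ : ∀ i ≤ k, ContinuousOn (ψ i) (S ×ˢ I))
    (hψ' : ∀ i < k, ∀ x ∈ S, ∀ t ∈ I, HasDerivAt (fun s => ψ i (x, s)) (ψ (i + 1) (x, t)) t)
    (hψ₀ : ∀ i < k, ∀ x ∈ S, ψ i (x, 0) = 0) :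
    ∃ Q : X × ℝ → F, ContinuousOn Q (S ×ˢ I) ∧ (∀ p ∈ S ×ˢ I, ψ 0 p = p.2 ^ k • Q p) ∧
      ∀ x ∈ S, Q (x, 0) = (k.factorial : ℝ)⁻¹ • ψ k (x, 0) := by
  induction k generalizing ψ with
  | zero => exact ⟨ψ 0, hψ 0 le_rfl, by simp, by simp⟩
  | succ k ih =>
    obtain ⟨Q, hQ, hQeq, hQ₀⟩ := ih (fun i => ψ (i + 1)) (fun i hi => hψ (i + 1) (by omega))
      (fun i hi => hψ' (i + 1) (by omega)) (fun i hi => hψ₀ (i + 1) (by omega))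
    obtain ⟨R, hR, hReq, hR₀⟩ := exists_eq_pow_succ_smul_of_hasDerivAt hI₀ (hψ 0 (by omega)) hQ
      (fun x hx t ht => hQeq (x, t) ⟨hx, ht⟩ ▸ hψ' 0 (by omega) x hx t ht) (hψ₀ 0 (by omega))
    refine ⟨R, hR, hReq, fun x hx => ?_⟩
    rw [hR₀ x hx, hQ₀ x hx, smul_smul, Nat.factorial_succ, Nat.cast_mul, mul_inv]
    push_cast
    rfl

theorem eq_zero_of_eq_pow_smul [I.OrdConnected] (hI : I ∈ 𝓝 (0 : ℝ)) (ψ : ℕ → X × ℝ → F)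
    {r : ℕ} {δ : X × ℝ → F} (hψ : ∀ i < r, ContinuousOn (ψ i) (S ×ˢ I))
    (hψ' : ∀ i < r, ∀ x ∈ S, ∀ t ∈ I, HasDerivAt (fun s => ψ i (x, s)) (ψ (i + 1) (x, t)) t)
    (hδ : ContinuousOn δ (S ×ˢ I)) (hfac : ∀ p ∈ S ×ˢ I, ψ 0 p = p.2 ^ r • δ p) :
    ∀ i < r, ∀ x ∈ S, ψ i (x, 0) = 0 := by
  intro i
  induction i using Nat.strong_induction_on with
  | _ i ih =>
  intro hi x hx
  obtain ⟨Q, hQ, hQeq, hQ₀⟩ := exists_eq_pow_smul_of_hasDerivAt (mem_of_mem_nhds hI) ψ i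
    (fun j hj => hψ j (by omega)) (fun j hj => hψ' j (by omega)) (fun j hj => ih j hj (by omega))
  -- On the line through `x`, `Q` is `t ^ (r - i) • δ` away from `t = 0`, so it vanishes at `t = 0`.
  have hline : MapsTo (fun t : ℝ => (x, t)) I (S ×ˢ I) := fun t ht => ⟨hx, ht⟩
  have hQc : ContinuousAt (fun t => Q (x, t)) 0 :=
    ((hQ _ ⟨hx, mem_of_mem_nhds hI⟩).comp (Continuous.prodMk_right x).continuousWithinAt
      hline).continuousAt hI
  have hδc : ContinuousAt (fun t => t ^ (r - i) • δ (x, t)) 0 :=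
    (continuousAt_id.pow _).smul
      ((hδ _ ⟨hx, mem_of_mem_nhds hI⟩).comp (Continuous.prodMk_right x).continuousWithinAt
        hline |>.continuousAt hI)
  have heq : (fun t => Q (x, t)) =ᶠ[𝓝[≠] 0] fun t => t ^ (r - i) • δ (x, t) := by
    filter_upwards [nhdsWithin_le_nhds hI, self_mem_nhdsWithin] with t ht ht₀
    have h := (hQeq (x, t) ⟨hx, ht⟩).symm.trans (hfac (x, t) ⟨hx, ht⟩)
    rw [show r = (r - i) + i by omega, pow_add, mul_comm, mul_smul] at h
    exact smul_right_injective F (pow_ne_zero i ht₀) h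
  have hQx : Q (x, 0) = 0 := by
    simpa [zero_pow (by omega : r - i ≠ 0)] using
      ((hQc.eventuallyEq_nhds_iff_eventuallyEq_nhdsNE hδc).1 heq).eq_of_nhds
  rw [hQ₀ x hx] at hQx
  exact (smul_eq_zero.1 hQx).resolve_left (by positivity)

end Divisibility

section PartialDerivatives

variable {E F : Type*} [NormedAddCommGroup E] [NormedSpace ℝ E] [NormedAddCommGroup F]
  [NormedSpace ℝ F] {f : E × ℝ → F} {V : Set (E × ℝ)} {x : E} {t : ℝ}

noncomputable def fderivFst (f : E × ℝ → F) (p : E × ℝ) : E →L[ℝ] F :=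
  (fderiv ℝ f p).comp (ContinuousLinearMap.inl ℝ E ℝ)

noncomputable def derivSnd (f : E × ℝ → F) (p : E × ℝ) : F :=
  fderiv ℝ f p (0, 1)

theorem DifferentiableAt.hasFDerivAt_fderivFst (hf : DifferentiableAt ℝ f (x, t)) :
    HasFDerivAt (fun y => f (y, t)) (fderivFst f (x, t)) x :=
  hf.hasFDerivAt.comp x (hasFDerivAt_prodMk_left x t)

theorem DifferentiableAt.fderivFst_eq (hf : DifferentiableAt ℝ f (x, t)) :
    fderivFst f (x, t) = fderiv ℝ (fun y => f (y, t)) x :=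
  hf.hasFDerivAt_fderivFst.fderiv.symm

theorem DifferentiableAt.hasDerivAt_derivSnd (hf : DifferentiableAt ℝ f (x, t)) :
    HasDerivAt (fun s => f (x, s)) (derivSnd f (x, t)) t :=
  hf.hasFDerivAt.comp_hasDerivAt t ((hasDerivAt_const t x).prodMk (hasDerivAt_id t))

theorem ContDiffOn.fderivFst_of_isOpen {m n : WithTop ℕ∞} (hf : ContDiffOn ℝ n f V)
    (hV : IsOpen V) (hmn : m + 1 ≤ n) : ContDiffOn ℝ m (fderivFst f) V :=
  (hf.fderiv_of_isOpen hV hmn).clm_comp contDiffOn_const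

theorem ContDiffOn.derivSnd_of_isOpen {m n : WithTop ℕ∞} (hf : ContDiffOn ℝ n f V)
    (hV : IsOpen V) (hmn : m + 1 ≤ n) : ContDiffOn ℝ m (derivSnd f) V :=
  (hf.fderiv_of_isOpen hV hmn).clm_apply contDiffOn_const

theorem ContDiffOn.iterate_derivSnd_of_isOpen {m n : WithTop ℕ∞} {k : ℕ}
    (hf : ContDiffOn ℝ n f V) (hV : IsOpen V) (hk : m + k ≤ n) :
    ContDiffOn ℝ m (derivSnd^[k] f) V := by
  induction k generalizing f n with
  | zero => exact hf.of_le (by simpa using hk)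
  | succ k ih =>
    rw [Function.iterate_succ_apply]
    exact ih (hf.derivSnd_of_isOpen hV (by simpa [add_assoc] using hk)) le_rfl

theorem ContDiffAt.hasDerivAt_fderivFst {n : WithTop ℕ∞} (hf : ContDiffAt ℝ n f (x, t))
    (hn : 2 ≤ n) :
    HasDerivAt (fun s => fderivFst f (x, s)) (fderivFst (derivSnd f) (x, t)) t := by
  have hf' : DifferentiableAt ℝ (fderiv ℝ f) (x, t) :=
    (hf.fderiv_right (m := 1) (by simpa [one_add_one_eq_two] using hn)).differentiableAt
      one_ne_zero
  have hsymm := hf.isSymmSndFDerivAt (by simpa using hn)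
  refine (hf'.hasDerivAt_derivSnd.clm_comp
    (hasDerivAt_const t (ContinuousLinearMap.inl ℝ E ℝ))).congr_deriv ?_
  ext v
  have h := fderiv_clm_apply hf' (differentiableAt_const ((0 : E), (1 : ℝ)))
  rw [fderivFst, show derivSnd f = fun q => fderiv ℝ f q (0, 1) from rfl, h]
  simpa [derivSnd] using hsymm (0, 1) (v, 0)

theorem exists_fderivFst_eq_pow_smul {U : Set E} {I : Set ℝ} [I.OrdConnected] (hU : IsOpen U)
    (hI : IsOpen I) (hI₀ : (0 : ℝ) ∈ I) {g δ : E × ℝ → F} {r : ℕ}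
    (hg : ContDiffOn ℝ (r + 1) g (U ×ˢ I)) (hδ : ContinuousOn δ (U ×ˢ I))
    (hfac : ∀ p ∈ U ×ˢ I, g p = p.2 ^ r • δ p) :
    ∃ Δ : E × ℝ → E →L[ℝ] F, ContinuousOn Δ (U ×ˢ I) ∧
      ∀ p ∈ U ×ˢ I, fderivFst g p = p.2 ^ r • Δ p := by
  have hV : IsOpen (U ×ˢ I) := hU.prod hI
  have hG (m : WithTop ℕ∞) (k : ℕ) (hk : m + k ≤ r + 1) :
      ContDiffOn ℝ m (derivSnd^[k] g) (U ×ˢ I) :=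
    hg.iterate_derivSnd_of_isOpen hV hk
  have hGd : ∀ k ≤ r, ∀ p ∈ U ×ˢ I, DifferentiableAt ℝ (derivSnd^[k] g) p := fun k hk p hp =>
    ((hG 1 k (by norm_cast; omega)).contDiffAt (hV.mem_nhds hp)).differentiableAt one_ne_zero
  have hG₀ : ∀ k < r, ∀ x ∈ U, derivSnd^[k] g (x, 0) = 0 :=
    eq_zero_of_eq_pow_smul (hI.mem_nhds hI₀) _
      (fun k hk => (hG 0 k (by norm_cast; omega)).continuousOn)
      (fun k hk x hx t ht => by
        rw [Function.iterate_succ_apply']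
        exact (hGd k hk.le _ ⟨hx, ht⟩).hasDerivAt_derivSnd) hδ hfac
  have hψ₀ : ∀ k < r, ∀ x ∈ U, fderivFst (derivSnd^[k] g) (x, 0) = 0 := by
    intro k hk x hx
    have hslice : (fun y => derivSnd^[k] g (y, 0)) =ᶠ[𝓝 x] fun _ => 0 := by
      filter_upwards [hU.mem_nhds hx] with y hy using hG₀ k hk y hy
    rw [(hGd k hk.le _ ⟨hx, hI₀⟩).fderivFst_eq, hslice.fderiv_eq, fderiv_const_apply]
  obtain ⟨Δ, hΔ, hΔeq, -⟩ := exists_eq_pow_smul_of_hasDerivAt hI₀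
    (fun k => fderivFst (derivSnd^[k] g)) r
    (fun k hk =>
      ((hG 1 k (by norm_cast; omega)).fderivFst_of_isOpen hV (m := 0) le_rfl).continuousOn)
    (fun k hk x hx t ht => by
      rw [Function.iterate_succ_apply']
      exact ((hG 2 k (by norm_cast; omega)).contDiffAt
        (hV.mem_nhds ⟨hx, ht⟩)).hasDerivAt_fderivFst le_rfl)
    hψ₀
  exact ⟨Δ, hΔ, hΔeq⟩

end PartialDerivatives

theorem partial_tangent_maps_keep_contact_order_general
    {n m : ℕ} (U : Set (EuclideanSpace ℝ (Fin n))) (hU : IsOpen U)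
    (a : ℝ) (ha : 0 < a)
    (f₁ f₂ : EuclideanSpace ℝ (Fin n) × ℝ → EuclideanSpace ℝ (Fin m))
    (hf₁ : ContDiffOn ℝ (⊤ : ℕ∞) f₁ (U ×ˢ Ioo (-a) a))
    (hf₂ : ContDiffOn ℝ (⊤ : ℕ∞) f₂ (U ×ˢ Ioo (-a) a))
    (r : ℕ)
    (δf : EuclideanSpace ℝ (Fin n) × ℝ → EuclideanSpace ℝ (Fin m))
    (hδf : ContinuousOn δf (U ×ˢ Ioo (-a) a))
    (hfac : ∀ x ∈ U, ∀ h ∈ Ioo (-a) a, f₂ (x, h) - f₁ (x, h) = h ^ r • δf (x, h)) :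
    ∃ Δ₂ : EuclideanSpace ℝ (Fin n) × ℝ →
        (EuclideanSpace ℝ (Fin n) →L[ℝ] EuclideanSpace ℝ (Fin m)),
      ContinuousOn Δ₂ (U ×ˢ Ioo (-a) a) ∧
      ∀ p ∈ U ×ˢ Ioo (-a) a,
        fderiv ℝ (fun x => f₂ (x, p.2)) p.1 - fderiv ℝ (fun x => f₁ (x, p.2)) p.1 =
          p.2 ^ r • Δ₂ p := by
  obtain ⟨Δ, hΔ, hΔeq⟩ := exists_fderivFst_eq_pow_smul hU isOpen_Ioo ⟨neg_lt_zero.2 ha, ha⟩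
    ((hf₂.sub hf₁).of_le (by exact_mod_cast le_top)) hδf fun p hp => hfac p.1 hp.1 p.2 hp.2
  refine ⟨Δ, hΔ, fun ⟨x, t⟩ hp => ?_⟩
  have hd : ∀ f : EuclideanSpace ℝ (Fin n) × ℝ → EuclideanSpace ℝ (Fin m),
      ContDiffOn ℝ (⊤ : ℕ∞) f (U ×ˢ Ioo (-a) a) → DifferentiableAt ℝ f (x, t) := fun f hf =>
    (hf.contDiffAt ((hU.prod isOpen_Ioo).mem_nhds hp)).differentiableAt (by simp)
  rw [← hΔeq _ hp, ((hd f₂ hf₂).fun_sub (hd f₁ hf₁)).fderivFst_eq,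
    fderiv_fun_sub (hd f₂ hf₂).hasFDerivAt_fderivFst.differentiableAt
      (hd f₁ hf₁).hasFDerivAt_fderivFst.differentiableAt]

/-- If two smooth maps on `U × (−a,a)` have order-`h^r` contact, then their partial Fréchet
derivatives in the first (`ℝ^n`) variable have order-`h^r` contact (no drop). -/
theorem partial_tangent_maps_keep_contact_order
    {n m : ℕ} (U : Set (EuclideanSpace ℝ (Fin n))) (hU : IsOpen U)
    (a : ℝ) (ha : 0 < a)
    (f₁ f₂ : EuclideanSpace ℝ (Fin n) × ℝ → EuclideanSpace ℝ (Fin m))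
    (hf₁ : ContDiffOn ℝ (⊤ : ℕ∞) f₁ (U ×ˢ Ioo (-a) a))
    (hf₂ : ContDiffOn ℝ (⊤ : ℕ∞) f₂ (U ×ˢ Ioo (-a) a))
    (r : ℕ) (hr : 1 ≤ r)
    (δf : EuclideanSpace ℝ (Fin n) × ℝ → EuclideanSpace ℝ (Fin m))
    (hδf : ContinuousOn δf (U ×ˢ Ioo (-a) a))
    (hfac : ∀ x ∈ U, ∀ h ∈ Ioo (-a) a, f₂ (x, h) - f₁ (x, h) = h ^ r • δf (x, h)) :
    ∃ Δ₂ : EuclideanSpace ℝ (Fin n) × ℝ →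
        (EuclideanSpace ℝ (Fin n) →L[ℝ] EuclideanSpace ℝ (Fin m)),
      ContinuousOn Δ₂ (U ×ˢ Ioo (-a) a) ∧
      ∀ p ∈ U ×ˢ Ioo (-a) a,
        fderiv ℝ (fun x => f₂ (x, p.2)) p.1 - fderiv ℝ (fun x => f₁ (x, p.2)) p.1 =
          p.2 ^ r • Δ₂ p :=
  partial_tangent_maps_keep_contact_order_general U hU a ha f₁ f₂ hf₁ hf₂ r δf hδf hfac
end

section
/- Let a > 0, let U ⊆ ℝ^d be open, let k ≥ 2 and r ≥ 1 be natural numbers with r + 1 ≤ k − 1, and let L₁, L₂ : (−a,a) × U → ℝ be of class C^k with L_j(0,x) = 0 for all x ∈ U. Define L̂_j : (−a,a) × U → ℝ by L̂_j(h,x) = L_j(h,x)/h for h ≠ 0 and L̂_j(0,x) = D₁L_j(0,x), where D₁ denotes the partial derivative with respect to h. Suppose there is a continuous function δL : (−a,a) × U → ℝ with L₂(h,x) − L₁(h,x) = h^{r+1}·δL(h,x) for all (h,x). Then: (i) L̂₁ and L̂₂ are of class C^{k−1}; (ii) there is a continuous function δ : (−a,a) × U → ℝ with L̂₂(h,x)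 − L̂₁(h,x) = h^r·δ(h,x) for all (h,x); and (iii) there is a continuous map δ′ : (−a,a) × U → Hom(ℝ^d, ℝ) with D_x L̂₂(h,x) − D_x L̂₁(h,x) = h^r·δ′(h,x) for all (h,x), where D_x denotes the partial Fréchet derivative with respect to the U-variable. -/
/-!
For `F (0, x) = 0`, Hadamard's lemma `F (h, x) = h • ∫₀¹ ∂ₕF (t h, x) dt` writes `F / h` as a
parametric integral, and differentiation under the integral sign shows that it is `C^(n-1)` when
`F` is `C^n`; this gives (i). Since a continuous function on `(-a, a) × U` is determined by its
values at `h ≠ 0`, applying Hadamard's lemma `r + 1` times to `L₂ - L₁ = h^(r+1) δL` shows that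
`δL` itself is `C^(k-r-1)`, hence `C^1`. By the same density argument `L̂₂ - L̂₁ = h^r δL`, which
gives (ii) with `δ = δL` and (iii) with `δ' = D_x δL`.
-/

open Set

noncomputable section

open Filter Topology MeasureTheory ContinuousLinearMap intervalIntegral
open scoped Interval

universe u

theorem eqOn_of_forall_fst_ne_zero {X Y : Type*} [TopologicalSpace X] [TopologicalSpace Y]
    [T2Space Y] {S : Set (ℝ × X)} (hS : IsOpen S) {f g : ℝ × X → Y}
    (hf : ContinuousOn f S) (hg : ContinuousOn g S) (hfg : ∀ p ∈ S, p.1 ≠ 0 → f p = g p) :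
    EqOn f g S := by
  have hdense : Dense {p : ℝ × X | p.1 ≠ 0} := by
    convert (dense_compl_singleton (0 : ℝ)).prod (dense_univ (X := X)) using 1
    ext; simp
  exact EqOn.of_subset_closure (fun p hp => hfg p hp.1 hp.2) hf hg inter_subset_left
    (hdense.open_subset_closure_inter hS)

section ParametricIntegral

variable {X G : Type*} [TopologicalSpace X] [NormedAddCommGroup G]

theorem eventually_forall_prodMk_mem {W : Set (ℝ × X)} (hW : IsOpen W) {K : Set ℝ}
    (hK : IsCompact K) {x₀ : X} (hx₀ : ∀ t ∈ K, (t, x₀) ∈ W) :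
    ∀ᶠ x in 𝓝 x₀, ∀ t ∈ K, (t, x) ∈ W :=
  hK.eventually_forall_of_forall_eventually fun t ht =>
    (continuous_swap.tendsto (x₀, t)).eventually (hW.mem_nhds (hx₀ t ht))

theorem exists_eventually_forall_norm_le {φ : ℝ × X → G} {W : Set (ℝ × X)} (hW : IsOpen W)
    (hφ : ContinuousOn φ W) {K : Set ℝ} (hK : IsCompact K) {x₀ : X}
    (hx₀ : ∀ t ∈ K, (t, x₀) ∈ W) :
    ∃ C, ∀ᶠ x in 𝓝 x₀, ∀ t ∈ K, ‖φ (t, x)‖ ≤ C := by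
  obtain ⟨M, hM⟩ := hK.exists_bound_of_continuousOn
    (hφ.comp (Continuous.prodMk_left x₀).continuousOn hx₀)
  refine ⟨M + 1, hK.eventually_forall_of_forall_eventually fun t ht => ?_⟩
  have hnear : ∀ᶠ q in 𝓝 (t, x₀), ‖φ q‖ < ‖φ (t, x₀)‖ + 1 :=
    (hφ.continuousAt (hW.mem_nhds (hx₀ t ht))).norm.eventually (gt_mem_nhds (lt_add_one _))
  filter_upwards [(continuous_swap.tendsto (x₀, t)).eventually hnear] with z hz
  exact hz.le.trans (add_le_add_left (hM t ht) 1)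

theorem ContinuousOn.aestronglyMeasurable_slice {φ : ℝ × X → G} {W : Set (ℝ × X)}
    (hφ : ContinuousOn φ W) {a b : ℝ} {x : X} (hx : ∀ t ∈ [[a, b]], (t, x) ∈ W) :
    AEStronglyMeasurable (fun t => φ (t, x)) (volume.restrict (Ι a b)) :=
  ((hφ.comp (Continuous.prodMk_left x).continuousOn hx).mono
    uIoc_subset_uIcc).aestronglyMeasurable measurableSet_uIoc

theorem continuousAt_intervalIntegral_param [NormedSpace ℝ G] [FirstCountableTopology X]
    {φ : ℝ × X → G} {W : Set (ℝ × X)} (hW : IsOpen W) (hφ : ContinuousOn φ W) {a b : ℝ} {x₀ : X}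
    (hx₀ : ∀ t ∈ [[a, b]], (t, x₀) ∈ W) :
    ContinuousAt (fun x => ∫ t in a..b, φ (t, x)) x₀ := by
  obtain ⟨C, hC⟩ := exists_eventually_forall_norm_le hW hφ isCompact_uIcc hx₀
  refine continuousAt_of_dominated_interval (bound := fun _ => C)
    ((eventually_forall_prodMk_mem hW isCompact_uIcc hx₀).mono fun x hx =>
      hφ.aestronglyMeasurable_slice hx)
    (hC.mono fun x hx => .of_forall fun t ht => hx t (uIoc_subset_uIcc ht))
    intervalIntegrable_const (.of_forall fun t ht => ?_)
  exact (hφ.continuousAt (hW.mem_nhds (hx₀ t (uIoc_subset_uIcc ht)))).comp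
    (Continuous.prodMk_right t).continuousAt

end ParametricIntegral

section Slices

variable {E G : Type*} [NormedAddCommGroup E] [NormedSpace ℝ E] [NormedAddCommGroup G]
  [NormedSpace ℝ G]

theorem DifferentiableAt.hasDerivAt_comp_prodMk_left {F : ℝ × E → G} {u : ℝ} {x : E}
    (hF : DifferentiableAt ℝ F (u, x)) :
    HasDerivAt (fun v => F (v, x)) (fderiv ℝ F (u, x) (1, 0)) u :=
  hF.hasFDerivAt.comp_hasDerivAt u ((hasDerivAt_id u).prodMk (hasDerivAt_const u x))

theorem DifferentiableAt.hasFDerivAt_comp_prodMk_right {F : ℝ × E → G} {u : ℝ} {x : E}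
    (hF : DifferentiableAt ℝ F (u, x)) :
    HasFDerivAt (fun y => F (u, y)) ((fderiv ℝ F (u, x)).comp (inr ℝ ℝ E)) x :=
  hF.hasFDerivAt.comp x (hasFDerivAt_prodMk_right u x)

theorem fderiv_slice_sub_eq_smul_of_eqOn {S : Set (ℝ × E)} (hS : IsOpen S) {f₁ f₂ g : ℝ × E → G}
    {c : ℝ → ℝ} (hf₁ : DifferentiableOn ℝ f₁ S) (hf₂ : DifferentiableOn ℝ f₂ S)
    (hg : DifferentiableOn ℝ g S) (hfg : EqOn (fun p => f₂ p - f₁ p) (fun p => c p.1 • g p) S)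
    {h : ℝ} {x : E} (hp : (h, x) ∈ S) :
    fderiv ℝ (fun y => f₂ (h, y)) x - fderiv ℝ (fun y => f₁ (h, y)) x =
      c h • (fderiv ℝ g (h, x)).comp (inr ℝ ℝ E) := by
  have hslice : ∀ {f : ℝ × E → G}, DifferentiableOn ℝ f S →
      HasFDerivAt (fun y => f (h, y)) ((fderiv ℝ f (h, x)).comp (inr ℝ ℝ E)) x :=
    fun hf => ((hf _ hp).differentiableAt (hS.mem_nhds hp)).hasFDerivAt_comp_prodMk_right
  have hloc : (fun y => f₂ (h, y) - f₁ (h, y)) =ᶠ[𝓝 x] fun y => c h • g (h, y) :=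
    eventually_of_mem ((Continuous.prodMk_right h).continuousAt.preimage_mem_nhds
      (hS.mem_nhds hp)) fun y hy => hfg hy
  rw [(hslice hf₂).fderiv, (hslice hf₁).fderiv]
  exact ((hslice hf₂).sub (hslice hf₁)).unique
    (((hslice hg).const_smul (c h)).congr_of_eventuallyEq hloc)

end Slices

section ParametricIntegralDeriv

variable {E G : Type u} [NormedAddCommGroup E] [NormedSpace ℝ E] [NormedAddCommGroup G]
  [NormedSpace ℝ G]

theorem hasFDerivAt_intervalIntegral_param {φ : ℝ × E → G} {W : Set (ℝ × E)} (hW : IsOpen W)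
    (hφ : ContDiffOn ℝ 1 φ W) {a b : ℝ} {x₀ : E} (hx₀ : ∀ t ∈ [[a, b]], (t, x₀) ∈ W) :
    HasFDerivAt (fun x => ∫ t in a..b, φ (t, x))
      (∫ t in a..b, (fderiv ℝ φ (t, x₀)).comp (inr ℝ ℝ E)) x₀ := by
  set ψ : ℝ × E → E →L[ℝ] G := fun q => (fderiv ℝ φ q).comp (inr ℝ ℝ E)
  have hψ : ContinuousOn ψ W := (hφ.continuousOn_fderiv_of_isOpen hW le_rfl).clm_comp
    continuousOn_const
  have hslice : ∀ t x, (t, x) ∈ W → HasFDerivAt (fun x => φ (t, x)) (ψ (t, x)) x :=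
    fun t x h => ((hφ.differentiableOn one_ne_zero _ h).differentiableAt
      (hW.mem_nhds h)).hasFDerivAt_comp_prodMk_right
  have hW₀ := eventually_forall_prodMk_mem hW isCompact_uIcc hx₀
  obtain ⟨C, hC⟩ := exists_eventually_forall_norm_le hW hψ isCompact_uIcc hx₀
  refine hasFDerivAt_integral_of_dominated_of_fderiv_le (F' := fun x t => ψ (t, x))
    (bound := fun _ => C) (hW₀.and hC)
    (hW₀.mono fun x hx => hφ.continuousOn.aestronglyMeasurable_slice hx)
    ((hφ.continuousOn.comp (Continuous.prodMk_left x₀).continuousOn hx₀).intervalIntegrable)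
    (hψ.aestronglyMeasurable_slice hx₀)
    (.of_forall fun t ht x hx => hx.2 t (uIoc_subset_uIcc ht)) intervalIntegrable_const
    (.of_forall fun t ht x hx => hslice t x (hx.1 t (uIoc_subset_uIcc ht)))

theorem contDiffAt_intervalIntegral_param {n : ℕ} {φ : ℝ × E → G} {W : Set (ℝ × E)}
    (hW : IsOpen W) (hφ : ContDiffOn ℝ n φ W) {a b : ℝ} {x₀ : E}
    (hx₀ : ∀ t ∈ [[a, b]], (t, x₀) ∈ W) :
    ContDiffAt ℝ n (fun x => ∫ t in a..b, φ (t, x)) x₀ := by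
  induction n generalizing G φ x₀ with
  | zero =>
    refine contDiffAt_zero.2 ⟨_, eventually_forall_prodMk_mem hW isCompact_uIcc hx₀,
      fun x hx => ?_⟩
    exact (continuousAt_intervalIntegral_param hW hφ.continuousOn hx).continuousWithinAt
  | succ m ih =>
    have hφ' : ContDiffOn ℝ (m + 1) φ W := by exact_mod_cast hφ
    have hψ : ContDiffOn ℝ m (fun q => (fderiv ℝ φ q).comp (inr ℝ ℝ E)) W :=
      (hφ'.fderiv_of_isOpen hW le_rfl).clm_comp contDiffOn_const
    rw [Nat.cast_succ, contDiffAt_succ_iff_hasFDerivAt]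
    exact ⟨_, ⟨_, eventually_forall_prodMk_mem hW isCompact_uIcc hx₀, fun x hx =>
      hasFDerivAt_intervalIntegral_param hW (hφ'.of_le le_add_self) hx⟩, ih hψ hx₀⟩

end ParametricIntegralDeriv

section HadamardQuotient

variable {E G : Type u} [NormedAddCommGroup E] [NormedSpace ℝ E] [NormedAddCommGroup G]
  [NormedSpace ℝ G] {a : ℝ} {U : Set E}

/-- The paper's `L̂`: by Hadamard's lemma this is `F (h, x) / h` when `F (0, x) = 0`, and it stays
smooth across `h = 0`. -/
def hadamardQuotient (F : ℝ × E → G) (p : ℝ × E) : G :=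
  ∫ t in (0 : ℝ)..1, fderiv ℝ F (t * p.1, p.2) (1, 0)

theorem hadamardQuotient_zero_fst [CompleteSpace G] (F : ℝ × E → G) (x : E) :
    hadamardQuotient F (0, x) = fderiv ℝ F (0, x) (1, 0) := by
  simp [hadamardQuotient]

theorem hadamardQuotient_eq_inv_smul [CompleteSpace G] {F : ℝ × E → G} (hU : IsOpen U)
    (hF : ContDiffOn ℝ 1 F (Ioo (-a) a ×ˢ U)) {h : ℝ} {x : E} (hp : (h, x) ∈ Ioo (-a) a ×ˢ U)
    (hh : h ≠ 0) (hF0 : F (0, x) = 0) :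
    hadamardQuotient F (h, x) = h⁻¹ • F (h, x) := by
  have hS : IsOpen (Ioo (-a) a ×ˢ U) := isOpen_Ioo.prod hU
  have hseg : ∀ u ∈ [[0, h]], (u, x) ∈ Ioo (-a) a ×ˢ U := fun u hu =>
    ⟨ordConnected_Ioo.uIcc_subset ⟨by linarith [hp.1.1, hp.1.2], by linarith [hp.1.1, hp.1.2]⟩
      hp.1 hu, hp.2⟩
  have hderiv : ∀ u ∈ [[0, h]], HasDerivAt (fun v => F (v, x)) (fderiv ℝ F (u, x) (1, 0)) u :=
    fun u hu => ((hF.differentiableOn one_ne_zero _ (hseg u hu)).differentiableAt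
      (hS.mem_nhds (hseg u hu))).hasDerivAt_comp_prodMk_left
  have hcont : ContinuousOn (fun u => fderiv ℝ F (u, x) (1, 0)) [[0, h]] :=
    ((hF.continuousOn_fderiv_of_isOpen hS le_rfl).comp (Continuous.prodMk_left x).continuousOn
      hseg).clm_apply continuousOn_const
  calc hadamardQuotient F (h, x) = h⁻¹ • ∫ u in (0 : ℝ)..h, fderiv ℝ F (u, x) (1, 0) := by
        simpa [hadamardQuotient] using
          integral_comp_mul_right (fun u => fderiv ℝ F (u, x) (1, 0)) (a := 0) (b := 1) hh
    _ = h⁻¹ • F (h, x) := by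
        rw [integral_eq_sub_of_hasDerivAt hderiv hcont.intervalIntegrable, hF0, sub_zero]

theorem contDiffOn_hadamardQuotient {n : ℕ} {F : ℝ × E → G} (hU : IsOpen U)
    (hF : ContDiffOn ℝ (n + 1) F (Ioo (-a) a ×ˢ U)) :
    ContDiffOn ℝ n (hadamardQuotient F) (Ioo (-a) a ×ˢ U) := by
  have hS : IsOpen (Ioo (-a) a ×ˢ U) := isOpen_Ioo.prod hU
  set W : Set (ℝ × (ℝ × E)) := (fun q => (q.1 * q.2.1, q.2.2)) ⁻¹' (Ioo (-a) a ×ˢ U)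
  have hW : IsOpen W := hS.preimage (by fun_prop)
  have hφ : ContDiffOn ℝ n (fun q : ℝ × (ℝ × E) => fderiv ℝ F (q.1 * q.2.1, q.2.2) (1, 0)) W :=
    ((hF.fderiv_of_isOpen hS le_rfl).comp (by fun_prop : ContDiff ℝ n
      fun q : ℝ × (ℝ × E) => (q.1 * q.2.1, q.2.2)).contDiffOn (mapsTo_preimage _ _)).clm_apply
      contDiffOn_const
  intro p hp
  refine (contDiffAt_intervalIntegral_param hW hφ fun t ht => ?_).contDiffWithinAt
  rw [uIcc_of_le zero_le_one] at ht
  exact ⟨⟨by nlinarith [ht.1, ht.2, hp.1.1, hp.1.2], by nlinarith [ht.1, ht.2, hp.1.1, hp.1.2]⟩,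
    hp.2⟩

theorem ContDiffOn.of_eq_fst_smul [CompleteSpace G] {n : ℕ} {F φ : ℝ × E → G} (hU : IsOpen U)
    (hF : ContDiffOn ℝ (n + 1) F (Ioo (-a) a ×ˢ U)) (hφ : ContinuousOn φ (Ioo (-a) a ×ˢ U))
    (hFφ : EqOn F (fun p => p.1 • φ p) (Ioo (-a) a ×ˢ U)) :
    ContDiffOn ℝ n φ (Ioo (-a) a ×ˢ U) := by
  have hq := contDiffOn_hadamardQuotient hU hF
  refine hq.congr (eqOn_of_forall_fst_ne_zero (isOpen_Ioo.prod hU) hφ hq.continuousOn ?_)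
  rintro ⟨h, x⟩ hp hh
  have h0 : ((0 : ℝ), x) ∈ Ioo (-a) a ×ˢ U :=
    ⟨⟨by linarith [hp.1.1, hp.1.2], by linarith [hp.1.1, hp.1.2]⟩, hp.2⟩
  have hF0 : F (0, x) = 0 := by simpa using hFφ h0
  rw [hadamardQuotient_eq_inv_smul hU (hF.of_le (by simp)) hp hh hF0, hFφ hp, inv_smul_smul₀ hh]

theorem ContDiffOn.of_eq_fst_pow_smul [CompleteSpace G] {n m : ℕ} {F φ : ℝ × E → G}
    (hU : IsOpen U) (hF : ContDiffOn ℝ (n + m) F (Ioo (-a) a ×ˢ U))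
    (hφ : ContinuousOn φ (Ioo (-a) a ×ˢ U))
    (hFφ : EqOn F (fun p => p.1 ^ m • φ p) (Ioo (-a) a ×ˢ U)) :
    ContDiffOn ℝ n φ (Ioo (-a) a ×ˢ U) := by
  induction m generalizing n φ with
  | zero => simpa using hF.congr fun p hp => by simpa using (hFφ hp).symm
  | succ m ih =>
    have hF' : ContDiffOn ℝ ((n + 1 : ℕ) + m) F (Ioo (-a) a ×ˢ U) := by
      convert hF using 1; push_cast; ring
    have hψ : ContDiffOn ℝ (n + 1 : ℕ) (fun p => p.1 • φ p) (Ioo (-a) a ×ˢ U) :=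
      ih hF' (continuousOn_fst.smul hφ) fun p hp => by simp [hFφ hp, pow_succ, mul_smul]
    exact ContDiffOn.of_eq_fst_smul hU (by exact_mod_cast hψ) hφ fun _ _ => rfl

end HadamardQuotient

theorem contDiffOn_of_eq_div {E : Type} [NormedAddCommGroup E] [NormedSpace ℝ E] {n : ℕ}
    {a : ℝ} {U : Set E} (hU : IsOpen U) {L Lh : ℝ × E → ℝ}
    (hL : ContDiffOn ℝ (n + 1) L (Ioo (-a) a ×ˢ U)) (hL0 : ∀ x ∈ U, L (0, x) = 0)
    (hLh : ∀ h x, h ≠ 0 → Lh (h, x) = L (h, x) / h)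
    (hLh0 : ∀ x, Lh (0, x) = derivWithin (fun h => L (h, x)) (Ioo (-a) a) 0) :
    ContDiffOn ℝ n Lh (Ioo (-a) a ×ˢ U) := by
  have hL1 : ContDiffOn ℝ 1 L (Ioo (-a) a ×ˢ U) := hL.of_le (by simp)
  refine (contDiffOn_hadamardQuotient hU hL).congr ?_
  rintro ⟨h, x⟩ hp
  rcases eq_or_ne h 0 with rfl | hh
  · have hd : DifferentiableAt ℝ L (0, x) :=
      (hL1.differentiableOn one_ne_zero _ hp).differentiableAt ((isOpen_Ioo.prod hU).mem_nhds hp)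
    rw [hLh0, hadamardQuotient_zero_fst, hd.hasDerivAt_comp_prodMk_left.hasDerivWithinAt.derivWithin
      (isOpen_Ioo.uniqueDiffWithinAt hp.1)]
  · rw [hLh h x hh, hadamardQuotient_eq_inv_smul hU hL1 hp hh (hL0 x hp.2), smul_eq_mul,
      inv_mul_eq_div]

theorem hat_lagrangians_contact_order_general
    (a : ℝ) {d : ℕ}
    (U : Set (EuclideanSpace ℝ (Fin d))) (hU : IsOpen U)
    (k r : ℕ) (hrk : r + 1 ≤ k - 1)
    (L₁ L₂ : ℝ × EuclideanSpace ℝ (Fin d) → ℝ)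
    (hL₁ : ContDiffOn ℝ k L₁ (Ioo (-a) a ×ˢ U))
    (hL₂ : ContDiffOn ℝ k L₂ (Ioo (-a) a ×ˢ U))
    (hL₁0 : ∀ x ∈ U, L₁ (0, x) = 0) (hL₂0 : ∀ x ∈ U, L₂ (0, x) = 0)
    (Lh₁ Lh₂ : ℝ × EuclideanSpace ℝ (Fin d) → ℝ)
    (hLh₁ : ∀ (h : ℝ) (x : EuclideanSpace ℝ (Fin d)), h ≠ 0 →
      Lh₁ (h, x) = L₁ (h, x) / h)
    (hLh₁0 : ∀ x : EuclideanSpace ℝ (Fin d),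
      Lh₁ (0, x) = derivWithin (fun h => L₁ (h, x)) (Ioo (-a) a) 0)
    (hLh₂ : ∀ (h : ℝ) (x : EuclideanSpace ℝ (Fin d)), h ≠ 0 →
      Lh₂ (h, x) = L₂ (h, x) / h)
    (hLh₂0 : ∀ x : EuclideanSpace ℝ (Fin d),
      Lh₂ (0, x) = derivWithin (fun h => L₂ (h, x)) (Ioo (-a) a) 0)
    (δL : ℝ × EuclideanSpace ℝ (Fin d) → ℝ)
    (hδL : ContinuousOn δL (Ioo (-a) a ×ˢ U))
    (hfac : ∀ h ∈ Ioo (-a) a, ∀ x ∈ U,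
      L₂ (h, x) - L₁ (h, x) = h ^ (r + 1) * δL (h, x)) :
    (ContDiffOn ℝ (k - 1 : ℕ) Lh₁ (Ioo (-a) a ×ˢ U) ∧
      ContDiffOn ℝ (k - 1 : ℕ) Lh₂ (Ioo (-a) a ×ˢ U)) ∧
    (∃ δ : ℝ × EuclideanSpace ℝ (Fin d) → ℝ,
      ContinuousOn δ (Ioo (-a) a ×ˢ U) ∧
      ∀ h ∈ Ioo (-a) a, ∀ x ∈ U, Lh₂ (h, x) - Lh₁ (h, x) = h ^ r * δ (h, x)) ∧
    (∃ δ' : ℝ × EuclideanSpace ℝ (Fin d) → (EuclideanSpace ℝ (Fin d) →L[ℝ] ℝ),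
      ContinuousOn δ' (Ioo (-a) a ×ˢ U) ∧
      ∀ h ∈ Ioo (-a) a, ∀ x ∈ U,
        fderiv ℝ (fun x' => Lh₂ (h, x')) x - fderiv ℝ (fun x' => Lh₁ (h, x')) x =
          h ^ r • δ' (h, x)) := by
  set S := Ioo (-a) a ×ˢ U
  have hS : IsOpen S := isOpen_Ioo.prod hU
  have hk : ((k - 1 : ℕ) : WithTop ℕ∞) + 1 = k := by norm_cast; omega
  have hC₁ : ContDiffOn ℝ (k - 1 : ℕ) Lh₁ S := contDiffOn_of_eq_div hU (hk ▸ hL₁) hL₁0 hLh₁ hLh₁0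
  have hC₂ : ContDiffOn ℝ (k - 1 : ℕ) Lh₂ S := contDiffOn_of_eq_div hU (hk ▸ hL₂) hL₂0 hLh₂ hLh₂0
  have hδ : ContDiffOn ℝ 1 δL S := by
    refine ContDiffOn.of_eq_fst_pow_smul hU (m := r + 1) ((hL₂.sub hL₁).of_le ?_)
      hδL fun p hp => hfac p.1 hp.1 p.2 hp.2
    exact_mod_cast (by omega : 1 + (r + 1) ≤ k)
  have hdiff : EqOn (fun p => Lh₂ p - Lh₁ p) (fun p => p.1 ^ r * δL p) S := by
    refine eqOn_of_forall_fst_ne_zero hS (hC₂.continuousOn.sub hC₁.continuousOn)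
      ((continuousOn_fst.pow r).mul hδL) fun ⟨h, x⟩ hp hh => ?_
    simp only [hLh₁ h x hh, hLh₂ h x hh, ← sub_div, hfac h hp.1 x hp.2]
    field_simp
    ring
  have hk0 : ((k - 1 : ℕ) : WithTop ℕ∞) ≠ 0 := by norm_cast; omega
  refine ⟨⟨hC₁, hC₂⟩, ⟨δL, hδL, fun h hh x hx => hdiff ⟨hh, hx⟩⟩,
    ⟨fun p => (fderiv ℝ δL p).comp (inr ℝ ℝ _),
      (hδ.continuousOn_fderiv_of_isOpen hS le_rfl).clm_comp continuousOn_const,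
      fun h hh x hx => ?_⟩⟩
  exact fderiv_slice_sub_eq_smul_of_eqOn (c := (· ^ r)) hS (hC₁.differentiableOn hk0)
    (hC₂.differentiableOn hk0) (hδ.differentiableOn one_ne_zero) hdiff ⟨hh, hx⟩

/-- If two discrete Lagrangians `L₁, L₂` of class `C^k`, vanishing at `h = 0`, have
order-`h^{r+1}` contact, then their hat versions `L̂_j = L_j/h` (extended at `h = 0` by the
`h`-derivative) are `C^{k−1}` and have order-`h^r` contact, as do their fiber derivatives in
the `x`-directions. -/
theorem hat_lagrangians_contact_order
    (a : ℝ) (ha : 0 < a) {d : ℕ}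
    (U : Set (EuclideanSpace ℝ (Fin d))) (hU : IsOpen U)
    (k r : ℕ) (hk : 2 ≤ k) (hr : 1 ≤ r) (hrk : r + 1 ≤ k - 1)
    (L₁ L₂ : ℝ × EuclideanSpace ℝ (Fin d) → ℝ)
    (hL₁ : ContDiffOn ℝ k L₁ (Ioo (-a) a ×ˢ U))
    (hL₂ : ContDiffOn ℝ k L₂ (Ioo (-a) a ×ˢ U))
    (hL₁0 : ∀ x ∈ U, L₁ (0, x) = 0) (hL₂0 : ∀ x ∈ U, L₂ (0, x) = 0)
    (Lh₁ Lh₂ : ℝ × EuclideanSpace ℝ (Fin d) → ℝ)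
    (hLh₁ : ∀ (h : ℝ) (x : EuclideanSpace ℝ (Fin d)), h ≠ 0 →
      Lh₁ (h, x) = L₁ (h, x) / h)
    (hLh₁0 : ∀ x : EuclideanSpace ℝ (Fin d),
      Lh₁ (0, x) = derivWithin (fun h => L₁ (h, x)) (Ioo (-a) a) 0)
    (hLh₂ : ∀ (h : ℝ) (x : EuclideanSpace ℝ (Fin d)), h ≠ 0 →
      Lh₂ (h, x) = L₂ (h, x) / h)
    (hLh₂0 : ∀ x : EuclideanSpace ℝ (Fin d),
      Lh₂ (0, x) = derivWithin (fun h => L₂ (h, x)) (Ioo (-a) a) 0)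
    (δL : ℝ × EuclideanSpace ℝ (Fin d) → ℝ)
    (hδL : ContinuousOn δL (Ioo (-a) a ×ˢ U))
    (hfac : ∀ h ∈ Ioo (-a) a, ∀ x ∈ U,
      L₂ (h, x) - L₁ (h, x) = h ^ (r + 1) * δL (h, x)) :
    (ContDiffOn ℝ (k - 1 : ℕ) Lh₁ (Ioo (-a) a ×ˢ U) ∧
      ContDiffOn ℝ (k - 1 : ℕ) Lh₂ (Ioo (-a) a ×ˢ U)) ∧
    (∃ δ : ℝ × EuclideanSpace ℝ (Fin d) → ℝ,
      ContinuousOn δ (Ioo (-a) a ×ˢ U) ∧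
      ∀ h ∈ Ioo (-a) a, ∀ x ∈ U, Lh₂ (h, x) - Lh₁ (h, x) = h ^ r * δ (h, x)) ∧
    (∃ δ' : ℝ × EuclideanSpace ℝ (Fin d) → (EuclideanSpace ℝ (Fin d) →L[ℝ] ℝ),
      ContinuousOn δ' (Ioo (-a) a ×ˢ U) ∧
      ∀ h ∈ Ioo (-a) a, ∀ x ∈ U,
        fderiv ℝ (fun x' => Lh₂ (h, x')) x - fderiv ℝ (fun x' => Lh₁ (h, x')) x =
          h ^ r • δ' (h, x)) :=
  hat_lagrangians_contact_order_general a U hU k r hrk L₁ L₂ hL₁ hL₂ hL₁0 hL₂0 Lh₁ Lh₂ hLh₁ hLh₁0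
    hLh₂ hLh₂0 δL hδL hfac
end
end
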